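/- arXiv:2109.01904 — 2 statements merged into one kernel-verified Lean document; each statement's English description precedes it below -/
import Mathlib

section
/- Let Ω be a finite probability space with probability measure P, and let Y_x, Y_{x'} : Ω → ℕ be random variables (counterfactual outcomes under interventions x and x'). If P(Y_{x'} ≥ k ∣ Y_{x'} = h) ≥ P(Y_x ≥ k ∣ Y_{x'} = h) whenever the conditioning event has positive probability, and k > h, then P(Y_x = l ∣ Y_{x'} = h) = 0 for every l ≥ k. -/
/-! Given `Y_{x'} = h < k`, the event `Y_{x'} ≥ k` is null, so the ordering hypothesis forces
`P(Y_x ≥ k ∣ Y_{x'} = h) = 0`; the event `Y_x = l` with `l ≥ k` lies inside `Y_x ≥ k`. -/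

open scoped Classical in
/-- Probability of an event `A` under a (finitely supported) measure given by weights `P`. -/
noncomputable def Pr {Ω : Type*} [Fintype Ω] (P : Ω → ℝ) (A : Set Ω) : ℝ :=
  ∑ ω, if ω ∈ A then P ω else 0

section Pr

variable {Ω : Type*} [Fintype Ω] (P : Ω → ℝ)

theorem Pr_eq_sum_indicator (A : Set Ω) : Pr P A = ∑ ω, A.indicator P ω := by
  classical
  simp only [Pr, Set.indicator_apply]

theorem Pr_empty : Pr P ∅ = 0 := by
  simp [Pr_eq_sum_indicator]

variable {P}

theorem Pr_nonneg (hP : ∀ ω, 0 ≤ P ω) (A : Set Ω) : 0 ≤ Pr P A := by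
  rw [Pr_eq_sum_indicator]
  exact Finset.sum_nonneg fun ω _ => Set.indicator_nonneg (fun ω _ => hP ω) ω

theorem Pr_mono (hP : ∀ ω, 0 ≤ P ω) {A B : Set Ω} (hAB : A ⊆ B) : Pr P A ≤ Pr P B := by
  simp only [Pr_eq_sum_indicator]
  exact Finset.sum_le_sum fun ω _ => Set.indicator_le_indicator_of_subset hAB hP ω

end Pr

theorem stmt_0_general {Ω : Type*} [Fintype Ω] (P : Ω → ℝ)
    (hP : ∀ ω, 0 ≤ P ω)
    (Yx Yx' : Ω → ℕ) (k h : ℕ) (hkh : k > h)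
    (hord : Pr P {ω | Yx' ω = h} > 0 →
      Pr P ({ω | k ≤ Yx' ω} ∩ {ω | Yx' ω = h}) / Pr P {ω | Yx' ω = h} ≥
        Pr P ({ω | k ≤ Yx ω} ∩ {ω | Yx' ω = h}) / Pr P {ω | Yx' ω = h}) :
    ∀ l, k ≤ l →
      Pr P ({ω | Yx ω = l} ∩ {ω | Yx' ω = h}) / Pr P {ω | Yx' ω = h} = 0 := by
  intro l hl
  rcases (Pr_nonneg hP {ω | Yx' ω = h}).eq_or_lt with hzero | hpos
  · rw [← hzero, div_zero]
  have hsub : {ω | Yx ω = l} ∩ {ω | Yx' ω = h} ⊆ {ω | k ≤ Yx ω} ∩ {ω | Yx' ω = h} :=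
    Set.inter_subset_inter_left _ fun ω (hω : Yx ω = l) => show k ≤ Yx ω by omega
  have hempty : {ω | k ≤ Yx' ω} ∩ {ω | Yx' ω = h} = ∅ :=
    Set.eq_empty_of_forall_notMem fun ω ⟨(hk : k ≤ Yx' ω), (hh : Yx' ω = h)⟩ => by omega
  refine le_antisymm ?_ (div_nonneg (Pr_nonneg hP _) hpos.le)
  calc Pr P ({ω | Yx ω = l} ∩ {ω | Yx' ω = h}) / Pr P {ω | Yx' ω = h}
      ≤ Pr P ({ω | k ≤ Yx ω} ∩ {ω | Yx' ω = h}) / Pr P {ω | Yx' ω = h} :=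
        div_le_div_of_nonneg_right (Pr_mono hP hsub) hpos.le
    _ ≤ Pr P ({ω | k ≤ Yx' ω} ∩ {ω | Yx' ω = h}) / Pr P {ω | Yx' ω = h} := hord hpos
    _ = 0 := by rw [hempty, Pr_empty, zero_div]

theorem stmt_0 {Ω : Type*} [Fintype Ω] (P : Ω → ℝ)
    (hP : ∀ ω, 0 ≤ P ω) (hPsum : ∑ ω, P ω = 1)
    (Yx Yx' : Ω → ℕ) (k h : ℕ) (hkh : k > h)
    (hord : Pr P {ω | Yx' ω = h} > 0 →
      Pr P ({ω | k ≤ Yx' ω} ∩ {ω | Yx' ω = h}) / Pr P {ω | Yx' ω = h} ≥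
        Pr P ({ω | k ≤ Yx ω} ∩ {ω | Yx' ω = h}) / Pr P {ω | Yx' ω = h}) :
    ∀ l, k ≤ l →
      Pr P ({ω | Yx ω = l} ∩ {ω | Yx' ω = h}) / Pr P {ω | Yx' ω = h} = 0 :=
  stmt_0_general P hP Yx Yx' k h hkh hord
end

section
/- Define two distributions on {0,1,2,3}: q₁ = (1/2, 1/6, 1/6, 1/6) and q₂ = (1/3, 1/3, 1/3, 0), and let Y(x,u) be as follows: Y(x,0)=x, Y(x,1)=0, Y(x,2)=1, Y(x,3)=1-x. Then the two induced models agree on all conditional probabilities P(Y(x,U) = y) for x, y ∈ {0,1}, yet disagree on the counterfactual P(Y(1,U) = 0 ∣ Y(0,U) = 1): under q₁ it equals 1/2 while under q₂ it equals 0. -/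
noncomputable def q₁ : Fin 4 → ℝ := ![1/2, 1/6, 1/6, 1/6]
noncomputable def q₂ : Fin 4 → ℝ := ![1/3, 1/3, 1/3, 0]

theorem Pr_coe_finset {Ω : Type*} [Fintype Ω] (P : Ω → ℝ) (s : Finset Ω) :
    Pr P ↑s = ∑ ω ∈ s, P ω := by
  classical
  simp [Pr, Finset.sum_ite_mem]

section Response

variable {Y : ℕ → Fin 4 → ℕ}

theorem response_eq (hY0 : ∀ x, Y x 0 = x) (hY1 : ∀ x, Y x 1 = 0)
    (hY2 : ∀ x, Y x 2 = 1) (hY3 : ∀ x, Y x 3 = 1 - x) (x : ℕ) :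
    Y x = ![x, 0, 1, 1 - x] := by
  ext u
  fin_cases u <;> simp [hY0, hY1, hY2, hY3]

variable (hY : ∀ x, Y x = ![x, 0, 1, 1 - x])
include hY

theorem Pr_response (q : Fin 4 → ℝ) {x y : ℕ} (hx : x ≤ 1) (hy : y ≤ 1) :
    Pr q {u | Y x u = y} =
      (if x = y then q 0 else 0) + (if y = 0 then q 1 else q 2) +
        (if x + y = 1 then q 3 else 0) := by
  interval_cases x <;> interval_cases y <;> simp [Pr, Fin.sum_univ_four, hY]

theorem counterfactual_eq (q : Fin 4 → ℝ) :
    Pr q ({u | Y 1 u = 0} ∩ {u | Y 0 u = 1}) / Pr q {u | Y 0 u = 1} = q 3 / (q 2 + q 3) := by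
  have h_joint : {u | Y 1 u = 0} ∩ {u | Y 0 u = 1} = ↑({3} : Finset (Fin 4)) := by
    ext u; fin_cases u <;> simp [hY]
  have h_cond : {u | Y 0 u = 1} = ↑({2, 3} : Finset (Fin 4)) := by
    ext u; fin_cases u <;> simp [hY]
  rw [h_joint, h_cond, Pr_coe_finset, Pr_coe_finset, Finset.sum_singleton,
    Finset.sum_pair (by decide)]

end Response

theorem stmt_10 (Y : ℕ → Fin 4 → ℕ)
    (hY0 : ∀ x, Y x 0 = x) (hY1 : ∀ x, Y x 1 = 0)
    (hY2 : ∀ x, Y x 2 = 1) (hY3 : ∀ x, Y x 3 = 1 - x) :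
    (∀ x y : ℕ, x ≤ 1 → y ≤ 1 →
        Pr q₁ {u | Y x u = y} = Pr q₂ {u | Y x u = y}) ∧
      Pr q₁ ({u | Y 1 u = 0} ∩ {u | Y 0 u = 1}) / Pr q₁ {u | Y 0 u = 1} = 1/2 ∧
      Pr q₂ ({u | Y 1 u = 0} ∩ {u | Y 0 u = 1}) / Pr q₂ {u | Y 0 u = 1} = 0 := by
  have hY := response_eq hY0 hY1 hY2 hY3
  refine ⟨fun x y hx hy => ?_, ?_, ?_⟩
  · rw [Pr_response hY q₁ hx hy, Pr_response hY q₂ hx hy]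
    interval_cases x <;> interval_cases y <;> simp [q₁, q₂] <;> norm_num
  · rw [counterfactual_eq hY]
    simp [q₁]
    norm_num
  · rw [counterfactual_eq hY]
    simp [q₂]
end
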